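/- Under the assumptions of the three-wave theorem (ω ∈ C¹(ℝ^d, ℝ), ω(0)=0, ∇ω(0)=0, ω(v)>0 and ∇ω(v)≠0 for v≠0, all level sets of ω connected, and g ∈ C¹(ℝ^d, ℝ) with ω(v')+ω(v'')=ω(v'+v'') ⟹ g(v')+g(v'')=g(v'+v'')), define g̃(v) = g(v) − ∇g(0)·v. Then there exists μ : ω(ℝ^d) → ℝ, continuous on ω(ℝ^d) and C¹ on ω(ℝ^d) \ {0}, such that g̃(v) = μ(ω(v)) for all v ∈ ℝ^d. -/

import Mathlib

/-!
Fix `v ≠ 0`. Because `∇ω(0) = 0`, near `w = 0` the set `{w | ω (v + w) - ω w = ω v}` of partners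
resonant with `v` is a hypersurface tangent to `ker ∇ω(v)`. Differentiating
`g v + g w = g (v + w)` along it gives `∇g(v) = ∇g(0)` on `ker ∇ω(v)`, so the derivative of
`g̃ = g - ∇g(0)` vanishes wherever that of `ω` does. After straightening the level sets of `ω` near
a point `x₀ ≠ 0` by the inverse function theorem, this says that `g̃ = m ∘ ω` near `x₀` with `m` of
class `C¹`. Hence `g̃` is locally constant on every level set, and constant on it by connectedness;
this defines `μ`, which is `C¹` on `ω(ℝ^d) \ {0}` because it agrees with the local `m`'s, and
continuous at `0` because small values of `ω` are attained on small balls.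
-/

open Set Filter Topology

theorem IsPreconnected.apply_eq_of_eventually_eq_comp {X Y Z : Type*} [TopologicalSpace X]
    {f : X → Y} {h : X → Z} {y : Y} (hs : IsPreconnected (f ⁻¹' {y}))
    (hloc : ∀ x ∈ f ⁻¹' {y}, ∃ m : Y → Z, ∀ᶠ x' in 𝓝 x, h x' = m (f x'))
    {a b : X} (ha : f a = y) (hb : f b = y) : h a = h b := by
  refine hs.induction₂ (fun a b => h a = h b) (fun x hx => ?_) (fun _ _ _ _ _ _ => Eq.trans)
    (fun _ _ _ _ => Eq.symm) ha hb
  obtain ⟨m, hm⟩ := hloc x hx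
  filter_upwards [nhdsWithin_le_nhds hm, self_mem_nhdsWithin] with x' hmx' hx'
  rw [mem_of_mem_nhds hm, hmx', show f x = f x' from hx.trans hx'.symm]

section Calculus

variable {E F : Type*} [NormedAddCommGroup E] [NormedSpace ℝ E]
  [NormedAddCommGroup F] [NormedSpace ℝ F]

theorem ContinuousLinearMap.range_eq_top_of_ne_zero {f : E →L[ℝ] ℝ} (hf : f ≠ 0) :
    f.range = ⊤ :=
  Module.Dual.range_eq_top_of_ne_zero (coe_injective.ne hf)

theorem HasFDerivAt.apply_eq_zero_of_locallyConstOn_fiber [CompleteSpace E]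
    {G : Type*} [NormedAddCommGroup G] [NormedSpace ℝ G] [FiniteDimensional ℝ G]
    {f : E → G} {f' : E →L[ℝ] G} {a : E} (hf : HasStrictFDerivAt f f' a) (hf' : f'.range = ⊤)
    {ψ : E → F} {ψ' : E →L[ℝ] F} (hψ : HasFDerivAt ψ ψ' a)
    (hconst : ∀ᶠ x in 𝓝 a, f x = f a → ψ x = ψ a) {k : E} (hk : f' k = 0) : ψ' k = 0 := by
  set φ := hf.implicitFunction f f' hf' (f a)
  have hφ : HasFDerivAt φ f'.ker.subtypeL 0 := (hf.to_implicitFunction hf').hasFDerivAt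
  have hφ0 : φ 0 = a := hf.implicitFunction_apply_image hf'
  have hfφ : ∀ᶠ k in 𝓝 0, f (φ k) = f a :=
    (tendsto_const_nhds.prodMk_nhds tendsto_id).eventually (hf.map_implicitFunction_eq hf')
  have hψφ : ∀ᶠ k in 𝓝 0, ψ (φ k) = ψ a := by
    have hφa : Tendsto φ (𝓝 0) (𝓝 a) := hφ0 ▸ hφ.continuousAt.tendsto
    filter_upwards [hfφ, hφa.eventually hconst] with k hk hk' using hk' hk
  have hcomp : HasFDerivAt (ψ ∘ φ) (ψ'.comp f'.ker.subtypeL) 0 := (hφ0 ▸ hψ).comp 0 hφ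
  have hzero : ψ'.comp f'.ker.subtypeL = 0 :=
    hcomp.unique ((hasFDerivAt_const (ψ a) 0).congr_of_eventuallyEq hψφ)
  simpa using congr($hzero ⟨k, hk⟩)

theorem Convex.apply_eq_of_hasFDerivAt_apply_sub_eq_zero {s : Set E} (hs : Convex ℝ s)
    {ψ : E → F} {ψ' : E → E →L[ℝ] F} (hψ : ∀ y ∈ s, HasFDerivAt ψ (ψ' y) y)
    {y z : E} (hy : y ∈ s) (hz : z ∈ s) (hψ' : ∀ w ∈ s, ψ' w (z - y) = 0) : ψ z = ψ y := by
  have hseg : ∀ t ∈ Icc (0 : ℝ) 1, y + t • (z - y) ∈ s := fun t ht =>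
    hs.add_smul_sub_mem hy hz ht
  have hderiv : ∀ t ∈ Icc (0 : ℝ) 1, HasDerivAt (fun t : ℝ => ψ (y + t • (z - y))) 0 t := by
    intro t ht
    have hline : HasDerivAt (fun t : ℝ => y + t • (z - y)) (z - y) t := by
      simpa using ((hasDerivAt_id t).smul_const (z - y)).const_add y
    simpa [Function.comp_def, hψ' _ (hseg t ht)] using
      (hψ _ (hseg t ht)).comp_hasDerivAt t hline
  have := constant_of_has_deriv_right_zero
    (fun t ht => (hderiv t ht).continuousAt.continuousWithinAt)
    (fun t ht => (hderiv t (Ico_subset_Icc_self ht)).hasDerivWithinAt) 1 (by simp)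
  simpa using this

theorem eventually_eq_apply_add_smul_of_fderiv_ker {ψ : E → F} {ℓ : E →L[ℝ] ℝ} {u y₀ : E}
    (hu : ℓ u = 1)
    (hψ : ∀ᶠ y in 𝓝 y₀, DifferentiableAt ℝ ψ y ∧ ∀ k, ℓ k = 0 → fderiv ℝ ψ y k = 0) :
    ∀ᶠ y in 𝓝 y₀, ψ y = ψ (y₀ + (ℓ y - ℓ y₀) • u) := by
  obtain ⟨r, hr, hball⟩ := Metric.eventually_nhds_iff_ball.1 hψ
  have hP : Tendsto (fun y => y₀ + (ℓ y - ℓ y₀) • u) (𝓝 y₀) (𝓝 y₀) := by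
    have : Continuous (fun y => y₀ + (ℓ y - ℓ y₀) • u) := by fun_prop
    simpa using this.tendsto y₀
  filter_upwards [Metric.ball_mem_nhds y₀ hr, hP (Metric.ball_mem_nhds y₀ hr)] with y hy hPy
  refine ((convex_ball y₀ r).apply_eq_of_hasFDerivAt_apply_sub_eq_zero
    (fun w hw => (hball w hw).1.hasFDerivAt) hy hPy fun w hw => (hball w hw).2 _ ?_).symm
  simp [hu]

theorem eventually_fderiv_comp_apply_eq_zero_of_ker {f : E → ℝ} {h : E → F} {Ψ : E → E}
    {ℓ : E →L[ℝ] ℝ} {y₀ : E} (hf : ContDiffAt ℝ 1 f (Ψ y₀)) (hh : ContDiffAt ℝ 1 h (Ψ y₀))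
    (hΨ : ContDiffAt ℝ 1 Ψ y₀) (hfΨ : ∀ᶠ y in 𝓝 y₀, f (Ψ y) = ℓ y)
    (hker : ∀ᶠ x in 𝓝 (Ψ y₀), ∀ k, fderiv ℝ f x k = 0 → fderiv ℝ h x k = 0) :
    ∀ᶠ y in 𝓝 y₀, DifferentiableAt ℝ (h ∘ Ψ) y ∧ ∀ k, ℓ k = 0 → fderiv ℝ (h ∘ Ψ) y k = 0 := by
  have hΨt := hΨ.continuousAt.tendsto
  filter_upwards [hΨ.eventually (by simp), hΨt.eventually (hf.eventually (by simp)),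
    hΨt.eventually (hh.eventually (by simp)), hΨt.eventually hker,
    eventually_eventually_nhds.2 hfΨ] with y hΨy hfy hhy hkery hfΨy
  have hfΨ' : fderiv ℝ (f ∘ Ψ) y = ℓ := by
    have hfΨy : f ∘ Ψ =ᶠ[𝓝 y] ℓ := hfΨy
    rw [hfΨy.fderiv_eq, ℓ.fderiv]
  refine ⟨(hhy.differentiableAt one_ne_zero).comp y (hΨy.differentiableAt one_ne_zero),
    fun k hk => ?_⟩
  rw [fderiv_comp y (hhy.differentiableAt one_ne_zero) (hΨy.differentiableAt one_ne_zero)]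
  rw [← hfΨ', fderiv_comp y (hfy.differentiableAt one_ne_zero)
    (hΨy.differentiableAt one_ne_zero)] at hk
  exact hkery _ hk

theorem exists_contDiffAt_eventually_eq_comp_of_ker_fderiv [CompleteSpace E]
    {f : E → ℝ} {h : E → F} {x₀ : E}
    (hf : ContDiffAt ℝ 1 f x₀) (hh : ContDiffAt ℝ 1 h x₀) (hf₀ : fderiv ℝ f x₀ ≠ 0)
    (hker : ∀ᶠ x in 𝓝 x₀, ∀ k, fderiv ℝ f x k = 0 → fderiv ℝ h x k = 0) :
    ∃ m : ℝ → F, ContDiffAt ℝ 1 m (f x₀) ∧ ∀ᶠ x in 𝓝 x₀, h x = m (f x) := by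
  set ℓ := fderiv ℝ f x₀
  obtain ⟨u, hu⟩ : ∃ u, ℓ u = 1 := by
    obtain ⟨u₀, hu₀⟩ := DFunLike.ne_iff.1 hf₀
    exact ⟨(ℓ u₀)⁻¹ • u₀, by simpa using inv_mul_cancel₀ hu₀⟩
  -- `Φ` straightens the level sets of `f` near `x₀` into those of `ℓ`
  set Φ : E → E := fun x => x + (f x - ℓ x) • u
  have hℓΦ : ∀ x, ℓ (Φ x) = f x := fun x => by simp [Φ, hu]
  have hΦ : HasFDerivAt Φ ((ContinuousLinearEquiv.refl ℝ E : E ≃L[ℝ] E) : E →L[ℝ] E) x₀ := by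
    have := (hasFDerivAt_id x₀).add
      (((hf.differentiableAt one_ne_zero).hasFDerivAt.sub ℓ.hasFDerivAt).smul_const u)
    convert this using 1
    · rfl
    · ext v
      simp [ℓ]
  have hΦc : ContDiffAt ℝ 1 Φ x₀ := contDiffAt_id.add ((hf.sub ℓ.contDiff.contDiffAt).smul
    contDiffAt_const)
  have hs := hΦc.hasStrictFDerivAt' hΦ one_ne_zero
  set Ψ := hs.localInverse Φ _ x₀
  have hΨ : ContDiffAt ℝ 1 Ψ (Φ x₀) := hΦc.to_localInverse hΦ one_ne_zero
  have hΨ₀ : Ψ (Φ x₀) = x₀ := hΦc.localInverse_apply_image hΦ one_ne_zero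
  have hker' := eventually_fderiv_comp_apply_eq_zero_of_ker (h := h) (by rwa [hΨ₀])
    (by rwa [hΨ₀]) hΨ
    (hs.eventually_right_inverse.mono fun y hy => by simpa [hℓΦ] using congrArg ℓ hy)
    (by rwa [hΨ₀])
  refine ⟨fun s => h (Ψ (Φ x₀ + (s - f x₀) • u)), ?_, ?_⟩
  · have hline : ContDiffAt ℝ 1 (fun s => Φ x₀ + (s - f x₀) • u) (f x₀) := by fun_prop
    have hΨ' : ContDiffAt ℝ 1 Ψ (Φ x₀ + (f x₀ - f x₀) • u) := by simpa using hΨ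
    have hh' : ContDiffAt ℝ 1 h (Ψ (Φ x₀ + (f x₀ - f x₀) • u)) := by simpa [hΨ₀] using hh
    exact hh'.comp (f x₀) (hΨ'.comp (f x₀) hline)
  · filter_upwards [hs.eventually_left_inverse,
      hΦc.continuousAt.tendsto.eventually (eventually_eq_apply_add_smul_of_fderiv_ker hu hker')]
      with x hx hx'
    rw [show h x = h (Ψ (Φ x)) from congrArg h hx.symm]
    simpa [hℓΦ] using hx'

end Calculus

def IsCollisionInvariant {E : Type*} [Add E] (ω g : E → ℝ) : Prop :=
  ∀ v w, ω v + ω w = ω (v + w) → g v + g w = g (v + w)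

theorem IsCollisionInvariant.map_zero {E : Type*} [AddZeroClass E] {ω g : E → ℝ}
    (hcoll : IsCollisionInvariant ω g) (hω0 : ω 0 = 0) : g 0 = 0 := by
  simpa using hcoll 0 0 (by simp [hω0])

section ThreeWave

variable {E : Type*} [NormedAddCommGroup E] [NormedSpace ℝ E]

noncomputable def reducedInvariant (g : E → ℝ) (v : E) : ℝ := g v - fderiv ℝ g 0 v

theorem hasFDerivAt_reducedInvariant {g : E → ℝ} {x : E} (hg : DifferentiableAt ℝ g x) :
    HasFDerivAt (reducedInvariant g) (fderiv ℝ g x - fderiv ℝ g 0) x :=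
  hg.hasFDerivAt.fun_sub (fderiv ℝ g 0).hasFDerivAt

theorem contDiff_reducedInvariant {g : E → ℝ} {n : WithTop ℕ∞} (hg : ContDiff ℝ n g) :
    ContDiff ℝ n (reducedInvariant g) :=
  hg.sub (fderiv ℝ g 0).contDiff

noncomputable def energyProfile (ω g : E → ℝ) (t : ℝ) : ℝ :=
  reducedInvariant g (Function.invFun ω t)

namespace IsCollisionInvariant

variable {ω g : E → ℝ}

theorem fderiv_apply_eq_fderiv_zero_apply [CompleteSpace E] (hcoll : IsCollisionInvariant ω g)
    (hω : ContDiff ℝ 1 ω) (hg : Differentiable ℝ g) (hω0 : ω 0 = 0)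
    (hdω0 : fderiv ℝ ω 0 = 0) {v : E} (hv : fderiv ℝ ω v ≠ 0) {k : E}
    (hk : fderiv ℝ ω v k = 0) : fderiv ℝ g v k = fderiv ℝ g 0 k := by
  have hshift : HasStrictFDerivAt (fun w : E => v + w) (ContinuousLinearMap.id ℝ E) 0 :=
    (hasStrictFDerivAt_id 0).const_add v
  have hres : HasStrictFDerivAt (fun w => ω (v + w) - ω w) (fderiv ℝ ω v) 0 := by
    have hω' : ∀ x, HasStrictFDerivAt ω (fderiv ℝ ω x) x := fun x =>
      hω.contDiffAt.hasStrictFDerivAt one_ne_zero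
    have := ((hω' (v + 0)).comp 0 hshift).fun_sub (hω' 0)
    simpa [Function.comp_def, hdω0] using this
  have hψ : HasFDerivAt (fun w => g (v + w) - g w) (fderiv ℝ g v - fderiv ℝ g 0) 0 := by
    have hg' : ∀ x, HasFDerivAt g (fderiv ℝ g x) x := fun x => (hg x).hasFDerivAt
    have := ((hg' (v + 0)).comp 0 hshift.hasFDerivAt).fun_sub (hg' 0)
    simpa [Function.comp_def] using this
  have hconst : ∀ w, ω (v + w) - ω w = ω (v + 0) - ω 0 → g (v + w) - g w = g (v + 0) - g 0 := by
    intro w hw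
    rw [add_zero, hω0, sub_zero] at hw
    have := hcoll v w (by linarith)
    rw [add_zero, hcoll.map_zero hω0, sub_zero]
    linarith
  have := hψ.apply_eq_zero_of_locallyConstOn_fiber hres
    (ContinuousLinearMap.range_eq_top_of_ne_zero hv) (Eventually.of_forall hconst) hk
  rwa [sub_apply, sub_eq_zero] at this

theorem exists_contDiffAt_reducedInvariant_eq_comp [CompleteSpace E]
    (hcoll : IsCollisionInvariant ω g) (hω : ContDiff ℝ 1 ω) (hg : ContDiff ℝ 1 g)
    (hω0 : ω 0 = 0) (hdω0 : fderiv ℝ ω 0 = 0) (hdω : ∀ v, v ≠ 0 → fderiv ℝ ω v ≠ 0)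
    {x₀ : E} (hx₀ : x₀ ≠ 0) :
    ∃ m : ℝ → ℝ, ContDiffAt ℝ 1 m (ω x₀) ∧ ∀ᶠ x in 𝓝 x₀, reducedInvariant g x = m (ω x) := by
  refine exists_contDiffAt_eventually_eq_comp_of_ker_fderiv hω.contDiffAt
    (contDiff_reducedInvariant hg).contDiffAt (hdω x₀ hx₀) ?_
  filter_upwards [isOpen_ne.mem_nhds hx₀] with x hx k hk
  rw [(hasFDerivAt_reducedInvariant (hg.differentiable one_ne_zero x)).fderiv,
    sub_apply, sub_eq_zero]
  exact hcoll.fderiv_apply_eq_fderiv_zero_apply hω (hg.differentiable one_ne_zero) hω0 hdω0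
    (hdω x hx) hk

theorem reducedInvariant_eq_of_map_eq [CompleteSpace E] (hcoll : IsCollisionInvariant ω g)
    (hω : ContDiff ℝ 1 ω) (hg : ContDiff ℝ 1 g) (hω0 : ω 0 = 0) (hdω0 : fderiv ℝ ω 0 = 0)
    (hωpos : ∀ v, v ≠ 0 → 0 < ω v) (hdω : ∀ v, v ≠ 0 → fderiv ℝ ω v ≠ 0)
    (hconn : ∀ a, IsPreconnected (ω ⁻¹' {a})) {v w : E} (hvw : ω v = ω w) :
    reducedInvariant g v = reducedInvariant g w := by
  have heq_zero : ∀ x, ω x = 0 → x = 0 := fun x hx => by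
    by_contra hx0
    exact (hωpos x hx0).ne' hx
  by_cases hv : ω v = 0
  · rw [heq_zero v hv, heq_zero w (hvw ▸ hv)]
  refine (hconn (ω v)).apply_eq_of_eventually_eq_comp (fun x hx => ?_) rfl hvw.symm
  have hx0 : x ≠ 0 := by
    rintro rfl
    exact hv ((show ω 0 = ω v from hx).symm.trans hω0)
  obtain ⟨m, -, hm⟩ := hcoll.exists_contDiffAt_reducedInvariant_eq_comp hω hg hω0 hdω0 hdω hx0
  exact ⟨m, hm⟩

theorem energyProfile_map_eq [CompleteSpace E] (hcoll : IsCollisionInvariant ω g)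
    (hω : ContDiff ℝ 1 ω) (hg : ContDiff ℝ 1 g) (hω0 : ω 0 = 0) (hdω0 : fderiv ℝ ω 0 = 0)
    (hωpos : ∀ v, v ≠ 0 → 0 < ω v) (hdω : ∀ v, v ≠ 0 → fderiv ℝ ω v ≠ 0)
    (hconn : ∀ a, IsPreconnected (ω ⁻¹' {a})) (v : E) :
    energyProfile ω g (ω v) = reducedInvariant g v :=
  hcoll.reducedInvariant_eq_of_map_eq hω hg hω0 hdω0 hωpos hdω hconn
    (Function.invFun_eq ⟨v, rfl⟩)

theorem contDiffAt_energyProfile [CompleteSpace E] (hcoll : IsCollisionInvariant ω g)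
    (hω : ContDiff ℝ 1 ω) (hg : ContDiff ℝ 1 g) (hω0 : ω 0 = 0) (hdω0 : fderiv ℝ ω 0 = 0)
    (hωpos : ∀ v, v ≠ 0 → 0 < ω v) (hdω : ∀ v, v ≠ 0 → fderiv ℝ ω v ≠ 0)
    (hconn : ∀ a, IsPreconnected (ω ⁻¹' {a})) {x₀ : E} (hx₀ : x₀ ≠ 0) :
    ContDiffAt ℝ 1 (energyProfile ω g) (ω x₀) := by
  obtain ⟨m, hm, hgm⟩ := hcoll.exists_contDiffAt_reducedInvariant_eq_comp hω hg hω0 hdω0 hdω hx₀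
  refine hm.congr_of_eventuallyEq ?_
  rw [← (hω.contDiffAt.hasStrictFDerivAt one_ne_zero).map_nhds_eq_of_surj
    (ContinuousLinearMap.range_eq_top_of_ne_zero (hdω x₀ hx₀)), EventuallyEq, eventually_map]
  filter_upwards [hgm] with x hx
  rw [hcoll.energyProfile_map_eq hω hg hω0 hdω0 hωpos hdω hconn, hx]

end IsCollisionInvariant

theorem eventually_mem_image_closedBall [ProperSpace E] {ω : E → ℝ} (hω : Continuous ω)
    (hω0 : ω 0 = 0) (hωpos : ∀ v, v ≠ 0 → 0 < ω v) {r : ℝ} (hr : 0 < r) :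
    ∀ᶠ t in 𝓝[range ω] 0, t ∈ ω '' Metric.closedBall 0 r := by
  obtain ⟨δ, hδ, hδle⟩ := (isCompact_sphere (0 : E) r).exists_forall_le' hω.continuousOn
    fun z hz => hωpos z (Metric.ne_of_mem_sphere hz hr.ne')
  rw [eventually_nhdsWithin_iff]
  filter_upwards [Iio_mem_nhds hδ] with t ht ⟨x, hxt⟩
  subst hxt
  by_cases hx : ‖x‖ ≤ r
  · exact ⟨x, mem_closedBall_zero_iff.2 hx, rfl⟩
  -- otherwise the value `ω x` is attained on the segment from `0` to the sphere along `x`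
  rw [not_le] at hx
  have hxpos : 0 < ‖x‖ := hr.trans hx
  have hsphere : (r / ‖x‖) • x ∈ Metric.sphere (0 : E) r := by
    rw [mem_sphere_zero_iff_norm, norm_smul, Real.norm_of_nonneg (by positivity),
      div_mul_cancel₀ _ hxpos.ne']
  obtain ⟨s, hs, hsx⟩ := intermediate_value_Icc (div_pos hr hxpos).le
    (hω.comp (continuous_id.smul continuous_const)).continuousOn
    (⟨by simpa [hω0] using (hωpos x (norm_pos_iff.1 hxpos)).le,
      (mem_Iio.1 ht).le.trans (hδle _ hsphere)⟩ :
      ω x ∈ Icc (ω ((0 : ℝ) • x)) (ω ((r / ‖x‖) • x)))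
  refine ⟨s • x, mem_closedBall_zero_iff.2 ?_, hsx⟩
  rw [norm_smul, Real.norm_of_nonneg hs.1, ← div_mul_cancel₀ r hxpos.ne']
  exact mul_le_mul_of_nonneg_right hs.2 hxpos.le

theorem continuousWithinAt_range_zero_of_comp_eq [ProperSpace E] {X : Type*}
    [TopologicalSpace X] {ω : E → ℝ} {h : E → X} {μ : ℝ → X} (hω : Continuous ω)
    (hω0 : ω 0 = 0) (hωpos : ∀ v, v ≠ 0 → 0 < ω v) (hh : ContinuousAt h 0)
    (hμ : ∀ x, μ (ω x) = h x) : ContinuousWithinAt μ (range ω) 0 := by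
  intro U hU
  rw [← hω0, hμ] at hU
  rw [Filter.mem_map]
  obtain ⟨r, hr, hball⟩ := Metric.nhds_basis_closedBall.mem_iff.1 (hh hU)
  filter_upwards [eventually_mem_image_closedBall hω hω0 hωpos hr] with t ⟨x, hx, hxt⟩
  rw [← hxt, mem_preimage, hμ]
  exact hball hx

end ThreeWave

theorem stmt_15_general (d : ℕ) (ω g : (Fin d → ℝ) → ℝ)
    (hω : ContDiff ℝ 1 ω) (hg : ContDiff ℝ 1 g)
    (hω0 : ω 0 = 0) (hdω0 : fderiv ℝ ω 0 = 0)
    (hωpos : ∀ v : Fin d → ℝ, v ≠ 0 → 0 < ω v)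
    (hdω : ∀ v : Fin d → ℝ, v ≠ 0 → fderiv ℝ ω v ≠ 0)
    (hconn : ∀ a : ℝ, IsPreconnected (ω ⁻¹' {a}))
    (hcoll : ∀ v w : Fin d → ℝ, ω v + ω w = ω (v + w) → g v + g w = g (v + w)) :
    ∃ μ : ℝ → ℝ, ContinuousOn μ (Set.range ω) ∧
      ContDiffOn ℝ 1 μ (Set.range ω \ {0}) ∧
      ∀ v : Fin d → ℝ, g v - fderiv ℝ g 0 v = μ (ω v) := by
  have hμ := IsCollisionInvariant.energyProfile_map_eq hcoll hω hg hω0 hdω0 hωpos hdω hconn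
  have hC1 : ∀ x, x ≠ 0 → ContDiffAt ℝ 1 (energyProfile ω g) (ω x) := fun x =>
    IsCollisionInvariant.contDiffAt_energyProfile hcoll hω hg hω0 hdω0 hωpos hdω hconn
  refine ⟨energyProfile ω g, ?_, ?_, fun v => (hμ v).symm⟩
  · rintro _ ⟨x, rfl⟩
    rcases eq_or_ne x 0 with rfl | hx
    · rw [hω0]
      exact continuousWithinAt_range_zero_of_comp_eq hω.continuous hω0 hωpos
        (contDiff_reducedInvariant hg).continuous.continuousAt hμ
    · exact (hC1 x hx).continuousAt.continuousWithinAt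
  · rintro _ ⟨⟨x, rfl⟩, hx⟩
    exact (hC1 x (by rintro rfl; exact hx hω0)).contDiffWithinAt

theorem stmt_15 (d : ℕ) (hd : 2 ≤ d) (ω g : (Fin d → ℝ) → ℝ)
    (hω : ContDiff ℝ 1 ω) (hg : ContDiff ℝ 1 g)
    (hω0 : ω 0 = 0) (hdω0 : fderiv ℝ ω 0 = 0)
    (hωpos : ∀ v : Fin d → ℝ, v ≠ 0 → 0 < ω v)
    (hdω : ∀ v : Fin d → ℝ, v ≠ 0 → fderiv ℝ ω v ≠ 0)
    (hconn : ∀ a : ℝ, IsPreconnected (ω ⁻¹' {a}))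
    (hcoll : ∀ v w : Fin d → ℝ, ω v + ω w = ω (v + w) → g v + g w = g (v + w)) :
    ∃ μ : ℝ → ℝ, ContinuousOn μ (Set.range ω) ∧
      ContDiffOn ℝ 1 μ (Set.range ω \ {0}) ∧
      ∀ v : Fin d → ℝ, g v - fderiv ℝ g 0 v = μ (ω v) :=
  stmt_15_general d ω g hω hg hω0 hdω0 hωpos hdω hconn hcoll
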